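/- arXiv:1202.2831 — 2 statements merged into one kernel-verified Lean document; each statement's English description precedes it below -/
import Mathlib

section
/- Let n ≥ 1, let B ⊆ R_n be a ℂ-linear subspace, and let σ = ℓ₁·ℓ₂·⋯·ℓ_n ∈ B be a product of n pairwise non-proportional binary linear forms. Assume that for every i ∈ {1,…,n} and every binary linear form s we have s·∏_{j≠i} ℓ_j ∈ B. Then B = R_n; equivalently, σ is a blow-up polynomial in the order n at the set of all its zeros, i.e. every binary form of degree n lies in B. -/
/-! The forms `m i = ∏ j ≠ i, ℓ j` are linearly independent in `R_{n-1}`: evaluation at the zero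
of `ℓ i` kills every `m j` except `m i`, since non-proportional linear forms have distinct zeros.
As `dim R_{n-1} = n`, they span `R_{n-1}`, so `B` contains `X c * R_{n-1}` for both variables,
and these span `R_n = R_1 * R_{n-1}`. -/

open MvPolynomial Finset

theorem LinearIndependent.of_dual_eq_zero_iff {ι R M : Type*} [CommRing R] [NoZeroDivisors R]
    [AddCommGroup M] [Module R M] {v : ι → M} (φ : ι → Module.Dual R M)
    (h : ∀ i j, φ i (v j) = 0 ↔ i ≠ j) : LinearIndependent R v := by
  rw [linearIndependent_iff']
  intro s g hsum i hi
  have hφ := congrArg (φ i) hsum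
  simp only [map_sum, map_smul, smul_eq_mul, map_zero] at hφ
  rw [Finset.sum_eq_single_of_mem i hi fun j _ hji => by rw [(h i j).2 hji.symm, mul_zero]] at hφ
  exact (mul_eq_zero.mp hφ).resolve_right fun h' => (h i i).1 h' rfl

namespace MvPolynomial

theorem IsHomogeneous.eq_sum_coeff_smul_X {σ R : Type*} [CommSemiring R] [Fintype σ]
    {s : MvPolynomial σ R} (hs : s.IsHomogeneous 1) :
    s = ∑ i, coeff (Finsupp.single i 1) s • X i := by
  have hs' : s ∈ Submodule.span R (Set.range (X : σ → MvPolynomial σ R)) :=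
    homogeneousSubmodule_one_eq_span_X (σ := σ) (R := R) ▸ hs
  obtain ⟨c, rfl⟩ := (Submodule.mem_span_range_iff_exists_fun R).mp hs'
  classical
  congr! with i
  simp [coeff_sum, coeff_X, Finsupp.single_eq_single_iff]

theorem finrank_homogeneousSubmodule (σ R : Type*) [CommSemiring R] [StrongRankCondition R]
    (n : ℕ) : Module.finrank R (homogeneousSubmodule σ R n) = (Nat.card σ).multichoose n := by
  classical
  rw [homogeneousSubmodule_eq_finsupp_supported, ← restrictSupport,
    Module.finrank_eq_nat_card_basis (basisRestrictSupport R _), ← Sym.natCard_sym_eq_multichoose,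
    Nat.card_congr (Sym.equivNatSum σ n)]
  rfl

section BinaryForms

noncomputable def zeroOfLinearForm {R : Type*} [CommRing R] (s : MvPolynomial (Fin 2) R) :
    Fin 2 → R :=
  ![-coeff (Finsupp.single 1 1) s, coeff (Finsupp.single 0 1) s]

theorem IsHomogeneous.eval_eq_fin_two {R : Type*} [CommRing R] {s : MvPolynomial (Fin 2) R}
    (hs : s.IsHomogeneous 1) (p : Fin 2 → R) :
    eval p s = coeff (Finsupp.single 0 1) s * p 0 + coeff (Finsupp.single 1 1) s * p 1 := by
  conv_lhs => rw [hs.eq_sum_coeff_smul_X]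
  simp [Fin.sum_univ_two]

theorem eval_zeroOfLinearForm_self {R : Type*} [CommRing R] {s : MvPolynomial (Fin 2) R}
    (hs : s.IsHomogeneous 1) : eval (zeroOfLinearForm s) s = 0 := by
  rw [hs.eval_eq_fin_two]
  simp only [zeroOfLinearForm, Matrix.cons_val_zero, Matrix.cons_val_one]
  ring

variable {K : Type*} [Field K]

theorem exists_eq_smul_of_eval_zeroOfLinearForm_eq_zero {s t : MvPolynomial (Fin 2) K}
    (hs : s.IsHomogeneous 1) (ht : t.IsHomogeneous 1) (hs0 : s ≠ 0)
    (h : eval (zeroOfLinearForm s) t = 0) : ∃ a : K, t = a • s := by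
  set a := coeff (Finsupp.single 0 1) s
  set b := coeff (Finsupp.single 1 1) s
  set c := coeff (Finsupp.single 0 1) t
  set d := coeff (Finsupp.single 1 1) t
  have hs' : s = a • X 0 + b • X 1 := hs.eq_sum_coeff_smul_X.trans (Fin.sum_univ_two _)
  have ht' : t = c • X 0 + d • X 1 := ht.eq_sum_coeff_smul_X.trans (Fin.sum_univ_two _)
  have hdet : a * d = b * c := by
    rw [ht.eval_eq_fin_two] at h
    simp only [zeroOfLinearForm, Matrix.cons_val_zero, Matrix.cons_val_one] at h
    linear_combination h
  by_cases ha : a = 0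
  · have hb : b ≠ 0 := fun hb => hs0 (by rw [hs', ha, hb]; simp)
    have hc : c = 0 := by simpa [ha, hb] using hdet
    refine ⟨d / b, ?_⟩
    rw [ht', hs', ha, hc]
    simp [smul_smul, div_mul_cancel₀ d hb]
  · refine ⟨c / a, ?_⟩
    rw [ht', hs', smul_add, smul_smul, smul_smul, div_mul_cancel₀ c ha]
    congr 2
    field_simp
    linear_combination hdet

theorem linearIndependent_prod_erase {ι : Type*} [Fintype ι] [DecidableEq ι]
    {ℓ : ι → MvPolynomial (Fin 2) K} (hℓ : ∀ i, (ℓ i).IsHomogeneous 1)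
    (hprop : ∀ i j, i ≠ j → ∀ a : K, ℓ i ≠ a • ℓ j) :
    LinearIndependent K fun i => ∏ j ∈ univ.erase i, ℓ j := by
  have hzero : ∀ i j, eval (zeroOfLinearForm (ℓ i)) (ℓ j) = 0 ↔ i = j := by
    refine fun i j => ⟨fun h => ?_, fun hij => hij ▸ eval_zeroOfLinearForm_self (hℓ i)⟩
    by_contra hij
    have hℓi : ℓ i ≠ 0 := by simpa using hprop i j hij 0
    obtain ⟨a, ha⟩ := exists_eq_smul_of_eval_zeroOfLinearForm_eq_zero (hℓ i) (hℓ j) hℓi h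
    exact hprop j i (Ne.symm hij) a ha
  refine .of_dual_eq_zero_iff (fun i => (aeval (zeroOfLinearForm (ℓ i))).toLinearMap) fun i j => ?_
  simp only [AlgHom.toLinearMap_apply, aeval_eq_eval, map_prod, prod_eq_zero_iff, mem_erase,
    mem_univ, and_true, hzero]
  exact ⟨fun ⟨k, hkj, hik⟩ => hik ▸ hkj, fun hij => ⟨i, hij, rfl⟩⟩

theorem span_prod_erase_eq_homogeneousSubmodule {ι : Type*} [Fintype ι] [DecidableEq ι]
    [Nonempty ι] {ℓ : ι → MvPolynomial (Fin 2) K} (hℓ : ∀ i, (ℓ i).IsHomogeneous 1)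
    (hprop : ∀ i j, i ≠ j → ∀ a : K, ℓ i ≠ a • ℓ j) :
    Submodule.span K (Set.range fun i => ∏ j ∈ univ.erase i, ℓ j) =
      homogeneousSubmodule (Fin 2) K (Fintype.card ι - 1) := by
  have hmem : ∀ i,
      ∏ j ∈ univ.erase i, ℓ j ∈ homogeneousSubmodule (Fin 2) K (Fintype.card ι - 1) :=
    fun i => by simpa using IsHomogeneous.prod (univ.erase i) ℓ (fun _ => 1) fun j _ => hℓ j
  have : Module.Finite K (homogeneousSubmodule (Fin 2) K (Fintype.card ι - 1)) :=
    Module.Finite.iff_fg.mpr (homogeneousSubmodule_fg _ _ _)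
  apply Submodule.eq_of_le_of_finrank_eq (Submodule.span_le.2 (Set.range_subset_iff.2 hmem))
  rw [finrank_span_eq_card (linearIndependent_prod_erase hℓ hprop), finrank_homogeneousSubmodule,
    Nat.card_eq_fintype_card, Fintype.card_fin, Nat.multichoose_two]
  have := Fintype.card_pos (α := ι)
  omega

end BinaryForms

end MvPolynomial

theorem blowup_order_one_at_each_zero_implies_full_general
    (n : ℕ) (hn : 1 ≤ n)
    (B : Submodule ℂ (MvPolynomial (Fin 2) ℂ))
    (hB : B ≤ homogeneousSubmodule (Fin 2) ℂ n)
    (ℓ : Fin n → MvPolynomial (Fin 2) ℂ)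
    (hℓ1 : ∀ i, (ℓ i).IsHomogeneous 1)
    (hprop : ∀ i j, i ≠ j → ∀ a : ℂ, ℓ i ≠ a • ℓ j)
    (hblow : ∀ i : Fin n, ∀ s : MvPolynomial (Fin 2) ℂ, s ≠ 0 → s.IsHomogeneous 1 →
      s * ∏ j ∈ Finset.univ.erase i, ℓ j ∈ B) :
    B = homogeneousSubmodule (Fin 2) ℂ n := by
  obtain ⟨k, rfl⟩ : ∃ k, n = k + 1 := ⟨n - 1, by omega⟩
  have hspan := span_prod_erase_eq_homogeneousSubmodule hℓ1 hprop
  rw [Fintype.card_fin, Nat.add_sub_cancel] at hspan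
  refine le_antisymm hB ?_
  rw [← homogeneousSubmodule_one_pow, pow_succ', homogeneousSubmodule_one_pow,
    homogeneousSubmodule_one_eq_span_X, ← hspan, Submodule.span_mul_span, Submodule.span_le]
  rintro _ ⟨_, ⟨c, rfl⟩, _, ⟨i, rfl⟩, rfl⟩
  exact hblow i (X c) (X_ne_zero c) (isHomogeneous_X ℂ c)

/-- Let `n ≥ 1`, let `B ⊆ R_n` be a ℂ-linear subspace of the binary forms of
degree `n`, and let `σ = ℓ₁⋯ℓ_n ∈ B` be a product of `n` pairwise non-proportional binary
linear forms.  If for every `i` and every binary linear form `s` we have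
`s * ∏_{j ≠ i} ℓ j ∈ B`, then `B = R_n`. -/
theorem blowup_order_one_at_each_zero_implies_full
    (n : ℕ) (hn : 1 ≤ n)
    (B : Submodule ℂ (MvPolynomial (Fin 2) ℂ))
    (hB : B ≤ homogeneousSubmodule (Fin 2) ℂ n)
    (ℓ : Fin n → MvPolynomial (Fin 2) ℂ)
    (hℓ0 : ∀ i, ℓ i ≠ 0)
    (hℓ1 : ∀ i, (ℓ i).IsHomogeneous 1)
    (hprop : ∀ i j, i ≠ j → ∀ a : ℂ, ℓ i ≠ a • ℓ j)
    (hσ : ∏ i, ℓ i ∈ B)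
    (hblow : ∀ i : Fin n, ∀ s : MvPolynomial (Fin 2) ℂ, s ≠ 0 → s.IsHomogeneous 1 →
      s * ∏ j ∈ Finset.univ.erase i, ℓ j ∈ B) :
    B = homogeneousSubmodule (Fin 2) ℂ n :=
  blowup_order_one_at_each_zero_implies_full_general n hn B hB ℓ hℓ1 hprop hblow
end

section
/- Let V be a ℂ-linear subspace of the space of homogeneous degree-4 polynomials in ℂ[x₀,…,x₄], and identify the space of homogeneous linear forms with ℂ⁵ via coefficients. If D ⊆ ℂ⁵ is Zariski-dense (dense for the topology whose closed sets are common zero loci of polynomials) and ℓ⁴ ∈ V for every linear form ℓ ∈ D, then V is the whole space of homogeneous degree-4 polynomials. -/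
/-!
A linear functional `φ` on forms of degree `n` that kills every `ℓⁿ` with `ℓ` ranging over a
set `D` of linear forms gives a polynomial `a ↦ φ ((∑ aᵢ xᵢ)ⁿ)` in the coefficients of `ℓ`, whose
coefficient at the monomial `aˢ` is `multinomial s * φ (xˢ)`. This polynomial vanishes on `D`, so
it is zero when `D` is Zariski-dense; in characteristic zero the multinomial coefficients are
invertible, so `φ` kills every monomial of degree `n`. Hence no functional separates the span of
the powers `ℓⁿ`, `ℓ ∈ D`, from the space of all forms of degree `n`.
-/

open MvPolynomial

namespace MvPolynomial

theorem homogeneousSubmodule_eq_span_monomial (σ R : Type*) [CommSemiring R] (n : ℕ) :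
    homogeneousSubmodule σ R n = Submodule.span R ((monomial · 1) '' {s | s.degree = n}) :=
  (homogeneousSubmodule_eq_finsupp_supported σ R n).trans (restrictSupport_eq_span R _)

variable {σ R : Type*} [Fintype σ]

section CommSemiring

variable [CommSemiring R]

noncomputable def linearForm (a : σ → R) : MvPolynomial σ R := ∑ i, C (a i) * X i

theorem isHomogeneous_linearForm_pow (a : σ → R) (n : ℕ) :
    (linearForm a ^ n).IsHomogeneous n := by
  simpa [linearForm] using
    (IsHomogeneous.sum _ _ 1 fun i _ => isHomogeneous_C_mul_X (a i) i).pow n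

variable [DecidableEq σ]

theorem mem_finsuppAntidiag_univ_iff_degree_eq {s : σ →₀ ℕ} {n : ℕ} :
    s ∈ Finset.univ.finsuppAntidiag n ↔ s.degree = n := by
  simp [Finsupp.degree_eq_sum]

theorem IsHomogeneous.support_subset_finsuppAntidiag {p : MvPolynomial σ R} {n : ℕ}
    (hp : p.IsHomogeneous n) : p.support ⊆ Finset.univ.finsuppAntidiag n := fun s hs => by
  rw [mem_finsuppAntidiag_univ_iff_degree_eq, Finsupp.degree_eq_weight_one]
  exact hp (mem_support_iff.1 hs)

theorem _root_.Module.Dual.apply_eq_sum_coeff_mul_of_isHomogeneous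
    (φ : Module.Dual R (MvPolynomial σ R)) {p : MvPolynomial σ R} {n : ℕ}
    (hp : p.IsHomogeneous n) :
    φ p = ∑ s ∈ Finset.univ.finsuppAntidiag n, coeff s p * φ (monomial s 1) := by
  conv_lhs => rw [p.as_sum, Finset.sum_subset hp.support_subset_finsuppAntidiag
    fun s _ hs => by rw [notMem_support_iff.1 hs, monomial_zero]]
  refine (map_sum _ _ _).trans (Finset.sum_congr rfl fun s _ => ?_)
  rw [← smul_eq_mul, ← map_smul, smul_monomial, smul_eq_mul, mul_one]

theorem coeff_linearForm_pow {a : σ → R} {n : ℕ} {s : σ →₀ ℕ}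
    (hs : s ∈ Finset.univ.finsuppAntidiag n) :
    coeff s (linearForm a ^ n) = s.multinomial * s.prod fun i k => a i ^ k := by
  have hsum : s.sum (fun _ k => k) = n := by
    rw [Finsupp.sum_fintype _ _ fun _ => rfl]
    exact (Finset.mem_finsuppAntidiag.1 hs).1
  simp only [linearForm, ← smul_eq_C_mul, coeff_linearCombination_X_pow_of_fintype, hsum, if_true]

noncomputable def dualForm (φ : Module.Dual R (MvPolynomial σ R)) (n : ℕ) : MvPolynomial σ R :=
  ∑ s ∈ Finset.univ.finsuppAntidiag n, monomial s (s.multinomial * φ (monomial s 1))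

theorem eval_dualForm (φ : Module.Dual R (MvPolynomial σ R)) (n : ℕ) (a : σ → R) :
    eval a (dualForm φ n) = φ (linearForm a ^ n) := by
  rw [φ.apply_eq_sum_coeff_mul_of_isHomogeneous (isHomogeneous_linearForm_pow a n), dualForm,
    map_sum]
  refine Finset.sum_congr rfl fun s hs => ?_
  rw [eval_monomial, coeff_linearForm_pow hs]
  ring

theorem coeff_dualForm (φ : Module.Dual R (MvPolynomial σ R)) {n : ℕ} {s : σ →₀ ℕ}
    (hs : s.degree = n) :
    coeff s (dualForm φ n) = s.multinomial * φ (monomial s 1) := by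
  simp [dualForm, coeff_sum, coeff_monomial, ← Finsupp.degree_eq_sum, hs]

theorem homogeneousSubmodule_le_ker_of_dualForm_eq_zero [NoZeroDivisors R] [CharZero R]
    {φ : Module.Dual R (MvPolynomial σ R)} {n : ℕ} (hφ : dualForm φ n = 0) :
    homogeneousSubmodule σ R n ≤ LinearMap.ker φ := by
  rw [homogeneousSubmodule_eq_span_monomial, Submodule.span_le]
  rintro _ ⟨s, hs, rfl⟩
  have hcoeff := coeff_dualForm φ hs
  rw [hφ, coeff_zero, eq_comm, mul_eq_zero] at hcoeff
  exact hcoeff.resolve_left (Nat.cast_ne_zero.2 (Nat.multinomial_pos _ _).ne')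

end CommSemiring

theorem span_linearForm_pow_eq_homogeneousSubmodule {K : Type*} [Field K] [CharZero K]
    {D : Set (σ → K)} (hD : ∀ p : MvPolynomial σ K, (∀ a ∈ D, eval a p = 0) → p = 0) (n : ℕ) :
    Submodule.span K ((linearForm · ^ n) '' D) = homogeneousSubmodule σ K n := by
  classical
  refine le_antisymm (Submodule.span_le.2 ?_) ?_
  · rintro _ ⟨a, -, rfl⟩
    exact isHomogeneous_linearForm_pow a n
  rw [← Subspace.dualAnnihilator_le_dualAnnihilator_iff]
  intro φ hφ
  rw [Submodule.mem_dualAnnihilator] at hφ ⊢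
  have hdual : dualForm φ n = 0 := hD _ fun a ha => by
    rw [eval_dualForm]
    exact hφ _ (Submodule.subset_span ⟨a, ha, rfl⟩)
  exact fun p hp => homogeneousSubmodule_le_ker_of_dualForm_eq_zero hdual hp

end MvPolynomial

/-- Let `V` be a ℂ-linear subspace of the homogeneous degree-4 polynomials in
`ℂ[x₀,…,x₄]`, and identify linear forms with `ℂ⁵` via coefficients,
`a ↦ ∑ i, C (a i) * X i`.  If `D ⊆ ℂ⁵` is Zariski-dense (i.e. the only polynomial
vanishing on all of `D` is the zero polynomial) and `ℓ⁴ ∈ V` for every linear form `ℓ`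
with coefficients in `D`, then `V` is the whole space of homogeneous degree-4
polynomials. -/
theorem fourth_powers_over_zariski_dense_set_span
    (V : Submodule ℂ (MvPolynomial (Fin 5) ℂ))
    (hV : V ≤ homogeneousSubmodule (Fin 5) ℂ 4)
    (D : Set (Fin 5 → ℂ))
    (hD : ∀ p : MvPolynomial (Fin 5) ℂ, (∀ a ∈ D, eval a p = 0) → p = 0)
    (hpow : ∀ a ∈ D, (∑ i, C (a i) * X i : MvPolynomial (Fin 5) ℂ) ^ 4 ∈ V) :
    V = homogeneousSubmodule (Fin 5) ℂ 4 := by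
  refine le_antisymm hV ?_
  rw [← span_linearForm_pow_eq_homogeneousSubmodule hD 4, Submodule.span_le]
  rintro _ ⟨a, ha, rfl⟩
  exact hpow a ha
end
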